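/- arXiv:2512.11385 — 7 statements merged into one kernel-verified Lean document; each statement's English description precedes it below -/
import Mathlib

section
/- Let K be a field, V a vector space over K, and let α₁,…,α_r be distinct elements of K. Let m < r be a nonnegative integer and let v₁,…,v_r ∈ V satisfy ∑_{i=1}^r α_i^s v_i = 0 for all s = 0,1,…,m. Then for any choice of r−m−1 distinct indices k₁,…,k_{r−m−1} ∈ {1,…,r}, the span of v₁,…,v_r equals the span of v_{k₁},…,v_{k_{r−m−1}}. -/
/-- Vandermonde-type elimination lemma: if `v₁,…,v_r` satisfy the power-sum
relations `∑ i, α i ^ s • v i = 0` for `s = 0,…,m` with distinct `α i`, then the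
span of all the `v i` equals the span of any `r - m - 1` of them. -/
theorem span_eq_span_of_power_relations
    {K : Type*} [Field K] {V : Type*} [AddCommGroup V] [Module K V]
    {r m : ℕ} (hm : m < r)
    (α : Fin r → K) (hα : Function.Injective α)
    (v : Fin r → V)
    (hrel : ∀ s : ℕ, s ≤ m → ∑ i : Fin r, α i ^ s • v i = 0)
    (k : Fin (r - m - 1) → Fin r) (hk : Function.Injective k) :
    Submodule.span K (Set.range v) = Submodule.span K (Set.range (v ∘ k)) := by
  -- generalized relation: for any polynomial of natDegree ≤ m, ∑ p(α i) • v i = 0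
  have hpoly : ∀ p : Polynomial K, p.natDegree ≤ m →
      ∑ i : Fin r, p.eval (α i) • v i = 0 := by
    intro p hp
    have heval : ∀ i : Fin r, p.eval (α i)
        = ∑ s ∈ Finset.range (m + 1), p.coeff s * α i ^ s := fun i =>
      Polynomial.eval_eq_sum_range' (Nat.lt_succ_of_le hp) _
    calc ∑ i : Fin r, p.eval (α i) • v i
        = ∑ i : Fin r, ∑ s ∈ Finset.range (m + 1), (p.coeff s * α i ^ s) • v i := by
          simp_rw [heval, Finset.sum_smul]
      _ = ∑ s ∈ Finset.range (m + 1), p.coeff s • ∑ i : Fin r, α i ^ s • v i := by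
          rw [Finset.sum_comm]
          simp_rw [Finset.smul_sum, mul_smul]
      _ = 0 := by
          refine Finset.sum_eq_zero fun s hs => ?_
          rw [hrel s (Nat.lt_succ_iff.mp (Finset.mem_range.mp hs)), smul_zero]
  -- the complement set
  set T : Finset (Fin r) := Finset.image k Finset.univ with hT
  have hTcard : T.card = r - m - 1 := by
    rw [hT, Finset.card_image_of_injective _ hk, Finset.card_univ, Fintype.card_fin]
  set S : Finset (Fin r) := Finset.univ \ T with hS
  have hScard : S.card = m + 1 := by
    rw [hS, Finset.card_sdiff_of_subset (Finset.subset_univ _), Finset.card_univ, Fintype.card_fin,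
      hTcard]
    omega
  have key : ∀ j ∈ S, v j ∈ Submodule.span K (Set.range (v ∘ k)) := by
    intro j hj
    set p := Lagrange.basis S α j with hp
    have hinj : Set.InjOn α (S : Set (Fin r)) := hα.injOn
    have hdeg : p.natDegree ≤ m := by
      rw [hp, Lagrange.natDegree_basis hinj hj, hScard]; omega
    have h0 := hpoly p hdeg
    rw [← Finset.sum_sdiff (Finset.subset_univ T), ← hS] at h0
    have hSsum : ∑ i ∈ S, p.eval (α i) • v i = v j := by
      rw [Finset.sum_eq_single_of_mem j hj]
      · rw [hp, Lagrange.eval_basis_self hinj hj, one_smul]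
      · intro i hi hij
        rw [hp, Lagrange.eval_basis_of_ne hij.symm hi, zero_smul]
    rw [hSsum, add_eq_zero_iff_eq_neg] at h0
    rw [h0]
    refine neg_mem (Submodule.sum_mem _ fun i hi => Submodule.smul_mem _ _ ?_)
    obtain ⟨b, -, rfl⟩ := Finset.mem_image.mp hi
    exact Submodule.subset_span ⟨b, rfl⟩
  rw [le_antisymm_iff]
  constructor
  · rw [Submodule.span_le]
    rintro _ ⟨i, rfl⟩
    by_cases hi : i ∈ T
    · obtain ⟨j, -, rfl⟩ := Finset.mem_image.mp hi
      exact Submodule.subset_span ⟨j, rfl⟩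
    · exact key i (by simp [hS, hi])
  · exact Submodule.span_mono (Set.range_comp_subset_range k v)
end

section
/- Let p be an odd prime, g ≥ 1 with g ≤ (p−1)/2, and 1 ≤ i, j ≤ g. Set d' = (p−1)(2g+1)/2 − ip + j, a' = g − j + 1/2, c' = g − j + 1 (in ℚ). Then the rational number ∏_{s=0}^{N−1}(a'+s) / ∏_{s=0}^{N−1}(c'+s) with N = d' − (p−1)/2 has p-adic valuation 0; that is, (a')_N/(c')_N, where (x)_N = x(x+1)⋯(x+N−1) is the Pochhammer symbol, is a p-adic unit. -/
/-!
Write `m = g - j`, `k = g - i` and `p = 2q + 1`; then `a' = m + 1/2`, `c' = m + 1` and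
`N = kp - m`, so that `m + N = kp` unless `N = 0`. Since `(1/2)_n = C(2n, n) n! / 4^n` and
`(1)_n = n!`, the ratio `(m + 1/2)_N / (m + 1)_N` equals `C(2(m+N), m+N) / (C(2m, m) 4^N)`.
Neither central binomial coefficient is divisible by `p`: `2m < p`, and by Lucas' theorem
`C(2kp, kp) ≡ C(2k, k) mod p` with `2k < p`.
-/

open Finset Nat

theorem prod_range_add_half (n : ℕ) :
    ∏ s ∈ range n, ((s : ℚ) + 1 / 2) = centralBinom n * n ! / 4 ^ n := by
  induction n with
  | zero => simp
  | succ n ih =>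
    have h : ((n + 1 : ℕ) : ℚ) * centralBinom (n + 1) = 2 * (2 * n + 1) * centralBinom n := by
      exact_mod_cast succ_mul_centralBinom_succ n
    rw [prod_range_succ, ih, factorial_succ, pow_succ]
    push_cast at h ⊢
    linear_combination -(n ! : ℚ) / (4 ^ n * 4) * h

theorem prod_range_natCast_add_add {R : Type*} [CommSemiring R] (x : R) (m N : ℕ) :
    ∏ s ∈ range (m + N), ((s : R) + x) =
      (∏ s ∈ range m, ((s : R) + x)) * ∏ s ∈ range N, ((m : R) + x + s) := by
  rw [prod_range_add]
  congr 1
  refine prod_congr rfl fun s _ => ?_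
  push_cast
  ring

theorem prod_range_nat_add_half_div_prod_range_nat_add_one (m N : ℕ) :
    (∏ s ∈ range N, ((m : ℚ) + 1 / 2 + s)) / ∏ s ∈ range N, ((m : ℚ) + 1 + s) =
      centralBinom (m + N) / (centralBinom m * 4 ^ N) := by
  have factorial_eq (n : ℕ) : ∏ s ∈ range n, ((s : ℚ) + 1) = n ! := by
    exact_mod_cast prod_range_add_one_eq_factorial n
  have half := prod_range_natCast_add_add (1 / 2 : ℚ) m N
  have one := prod_range_natCast_add_add (1 : ℚ) m N
  rw [prod_range_add_half, prod_range_add_half] at half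
  rw [factorial_eq, factorial_eq] at one
  set A := ∏ s ∈ range N, ((m : ℚ) + 1 / 2 + s)
  set B := ∏ s ∈ range N, ((m : ℚ) + 1 + s)
  have : (m ! : ℚ) ≠ 0 := by positivity
  have : (centralBinom m : ℚ) ≠ 0 := by exact_mod_cast (centralBinom_pos m).ne'
  have hA :
      A = centralBinom (m + N) * (m + N)! / 4 ^ (m + N) / (centralBinom m * m ! / 4 ^ m) := by
    rw [half]; field_simp
  have hB : B = (m + N)! / m ! := by
    rw [one]; field_simp
  rw [hA, hB, pow_add]
  field_simp

theorem Nat.Prime.not_dvd_centralBinom_of_two_mul_lt {p n : ℕ} (hp : p.Prime) (h : 2 * n < p) :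
    ¬ p ∣ centralBinom n := by
  have := factorization_centralBinom_eq_zero_of_two_mul_lt h
  rw [factorization_eq_zero_iff] at this
  simpa [hp, (centralBinom_pos n).ne'] using this

theorem Nat.Prime.dvd_centralBinom_mul_iff {p : ℕ} (hp : p.Prime) (k : ℕ) :
    p ∣ centralBinom (p * k) ↔ p ∣ centralBinom k := by
  have := Fact.mk hp
  rw [centralBinom_eq_two_mul_choose, centralBinom_eq_two_mul_choose, mul_left_comm]
  exact (Choose.choose_mul_mul_modEq_choose_nat).dvd_iff dvd_rfl

theorem padicValRat_natCast_div_natCast_eq_zero {p a b : ℕ} [Fact p.Prime]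
    (ha : ¬ p ∣ a) (hb : ¬ p ∣ b) : padicValRat p ((a : ℚ) / b) = 0 := by
  have ha0 : (a : ℚ) ≠ 0 := Nat.cast_ne_zero.2 (by rintro rfl; exact ha (dvd_zero p))
  have hb0 : (b : ℚ) ≠ 0 := Nat.cast_ne_zero.2 (by rintro rfl; exact hb (dvd_zero p))
  rw [padicValRat.div ha0 hb0, padicValRat.of_nat, padicValRat.of_nat,
    padicValNat.eq_zero_of_not_dvd ha, padicValNat.eq_zero_of_not_dvd hb, sub_self]

theorem Nat.Prime.not_dvd_four_pow {p : ℕ} (hp : p.Prime) (hodd : Odd p) (n : ℕ) :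
    ¬ p ∣ 4 ^ n := by
  rw [← hp.coprime_iff_not_dvd, show 4 ^ n = 2 ^ (2 * n) by rw [pow_mul]; rfl]
  exact hodd.coprime_two_right.pow_right _

theorem mul_div_two_sub_mul_add_sub_div_two_eq {p q g i j : ℕ} (hpq : p = 2 * q + 1)
    (hig : i ≤ g) (hjg : j ≤ g) (hg : g ≤ q) :
    (p - 1) * (2 * g + 1) / 2 - i * p + j - (p - 1) / 2 = p * (g - i) - (g - j) := by
  subst hpq
  obtain ⟨k, rfl⟩ : ∃ k, g = i + k := ⟨g - i, by omega⟩
  have hqk : k = 0 ∧ q * k = 0 ∨ q ≤ q * k := by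
    rcases k with _ | k
    · simp
    · exact .inr (Nat.le_mul_of_pos_right q k.succ_pos)
  have : (2 * q + 1 - 1) * (2 * (i + k) + 1) / 2 = 2 * (q * i) + 2 * (q * k) + q := by
    rw [Nat.add_sub_cancel, Nat.mul_assoc, Nat.mul_div_cancel_left _ two_pos]; ring
  rw [this, show i * (2 * q + 1) = 2 * (q * i) + i by ring,
    show (2 * q + 1) * (i + k - i) = 2 * (q * k) + k by rw [Nat.add_sub_cancel_left]; ring]
  omega

theorem pochhammer_ratio_padicVal_zero_general (p : ℕ) [hp : Fact p.Prime] (hodd : Odd p)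
    (g i j : ℕ) (hg : g ≤ (p - 1) / 2)
    (hig : i ≤ g) (hjg : j ≤ g)
    (a' c' : ℚ) (d' N : ℕ)
    (ha' : a' = (g : ℚ) - j + 1 / 2)
    (hc' : c' = (g : ℚ) - j + 1)
    (hd' : d' = (p - 1) * (2 * g + 1) / 2 - i * p + j)
    (hN : N = d' - (p - 1) / 2) :
    padicValRat p ((∏ s ∈ Finset.range N, (a' + s)) / (∏ s ∈ Finset.range N, (c' + s))) = 0 := by
  obtain ⟨q, hq⟩ := hodd
  have hN' : N = p * (g - i) - (g - j) := by
    rw [hN, hd']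
    exact mul_div_two_sub_mul_add_sub_div_two_eq hq hig hjg (by omega)
  rcases Nat.eq_zero_or_pos N with hN0 | hNpos
  · simp [hN0]
  have hmN : g - j + N = p * (g - i) := by omega
  have hnum : ¬ p ∣ centralBinom (g - j + N) := by
    rw [hmN, hp.out.dvd_centralBinom_mul_iff]
    exact hp.out.not_dvd_centralBinom_of_two_mul_lt (by omega)
  have hden : ¬ p ∣ centralBinom (g - j) * 4 ^ N :=
    hp.out.not_dvd_mul (hp.out.not_dvd_centralBinom_of_two_mul_lt (by omega))
      (hp.out.not_dvd_four_pow ⟨q, hq⟩ N)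
  rw [ha', hc', ← Nat.cast_sub hjg, prod_range_nat_add_half_div_prod_range_nat_add_one]
  exact_mod_cast padicValRat_natCast_div_natCast_eq_zero hnum hden

/-- With `a' = g−j+1/2`, `c' = g−j+1` in `ℚ`, `d' = (p−1)(2g+1)/2 − ip + j` and
`N = d' − (p−1)/2`, the ratio of Pochhammer symbols `(a')_N / (c')_N` is a
`p`-adic unit, i.e. its `p`-adic valuation is `0`. -/
theorem pochhammer_ratio_padicVal_zero (p : ℕ) [hp : Fact p.Prime] (hodd : Odd p)
    (g i j : ℕ) (hg1 : 1 ≤ g) (hg : g ≤ (p - 1) / 2)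
    (hi1 : 1 ≤ i) (hig : i ≤ g) (hj1 : 1 ≤ j) (hjg : j ≤ g)
    (a' c' : ℚ) (d' N : ℕ)
    (ha' : a' = (g : ℚ) - j + 1 / 2)
    (hc' : c' = (g : ℚ) - j + 1)
    (hd' : d' = (p - 1) * (2 * g + 1) / 2 - i * p + j)
    (hN : N = d' - (p - 1) / 2) :
    padicValRat p ((∏ s ∈ Finset.range N, (a' + s)) / (∏ s ∈ Finset.range N, (c' + s))) = 0 :=
  pochhammer_ratio_padicVal_zero_general p (hp := hp) hodd g i j hg hig hjg a' c' d' N ha' hc' hd'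
    hN
end

section
/- Let p be an odd prime, g ≥ 1 with g ≤ (p−1)/2, 1 ≤ i, j ≤ g, and set d' = (p−1)(2g+1)/2 − ip + j, a' = g−j+1/2, c' = g−j+1. For any tuple (n₁,…,n_{2g−1}) of nonnegative integers with n_k ≤ (p−1)/2 for all k and d' − (p−1)/2 ≤ n₁+⋯+n_{2g−1} ≤ d', the rational number A = (a')_{|n|} · ∏_k (1/2)_{n_k} / ((c')_{|n|} · ∏_k n_k!) is a p-adic unit (in particular, its reduction mod p is a nonzero element of 𝔽_p). -/
/-!
Put `m = g - j` and `N = |n|`. Then `a' + s = (2m + 1 + 2s)/2` and `c' + s = m + 1 + s`, and the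
degree bounds place `m + N` in `[p(g - i), p(g - i) + (p - 1)/2]`. All integers involved stay below
`p²`, where Legendre's formula reads `v_p(x!) = ⌊x/p⌋`. Hence `v_p((c')_N) = ⌊(m + N)/p⌋ = g - i`,
and splitting `(2m + 1)(2m + 2)⋯(2m + 2N)` into its odd and even factors gives
`v_p((a')_N) = ⌊2(m + N)/p⌋ - ⌊(m + N)/p⌋ = g - i` as well. The remaining factors `(1/2)_{n_k}` and
`n_k!` are products of positive integers below `p`, so all valuations cancel.
-/

open Finset
open scoped Nat

theorem padicValNat_two_of_ne_two {p : ℕ} [hp : Fact p.Prime] (hp2 : p ≠ 2) :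
    padicValNat p 2 = 0 :=
  padicValNat.eq_zero_of_not_dvd fun h =>
    hp2 ((Nat.prime_dvd_prime_iff_eq hp.out Nat.prime_two).mp h)

theorem padicValNat_factorial_of_lt_sq {p n : ℕ} [Fact p.Prime] (h : n < p * p) :
    padicValNat p n ! = n / p := by
  rw [padicValNat_factorial (b := 2), Finset.sum_Ico_succ_top le_rfl, Finset.Ico_self,
    Finset.sum_empty, zero_add, pow_one]
  rcases eq_or_ne n 0 with rfl | hn
  · simp
  exact Nat.log_lt_of_lt_pow hn (by rwa [sq])

theorem padicValNat_ascFactorial_add_div_of_lt_sq {p : ℕ} [hp : Fact p.Prime] {m N : ℕ}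
    (h : m + N < p * p) :
    padicValNat p ((m + 1).ascFactorial N) + m / p = (m + N) / p := by
  have h' := congrArg (padicValNat p) (Nat.factorial_mul_ascFactorial m N)
  rw [padicValNat.mul (Nat.factorial_ne_zero m) (Nat.ascFactorial_pos m N).ne',
    padicValNat_factorial_of_lt_sq h, padicValNat_factorial_of_lt_sq (by omega)] at h'
  omega

theorem Nat.ascFactorial_two_mul (m N : ℕ) :
    (2 * m + 1).ascFactorial (2 * N)
      = (∏ s ∈ range N, (2 * m + 1 + 2 * s)) * 2 ^ N * (m + 1).ascFactorial N := by
  induction N with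
  | zero => simp
  | succ N ih =>
    rw [show 2 * (N + 1) = 2 * N + 1 + 1 by ring, Nat.ascFactorial_succ, Nat.ascFactorial_succ,
      ih, prod_range_succ, Nat.ascFactorial_succ, pow_succ]
    ring

theorem padicValNat_prod_odd_add_div_of_lt_sq {p : ℕ} [hp : Fact p.Prime] (hp2 : p ≠ 2)
    {m N : ℕ} (h : 2 * (m + N) < p * p) :
    padicValNat p (∏ s ∈ range N, (2 * m + 1 + 2 * s)) + (m + N) / p + 2 * m / p
      = 2 * (m + N) / p + m / p := by
  have hO : ∏ s ∈ range N, (2 * m + 1 + 2 * s) ≠ 0 := prod_ne_zero_iff.mpr fun _ _ => by omega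
  have h2 : padicValNat p (2 ^ N) = 0 := by
    rw [padicValNat.pow 2 N, padicValNat_two_of_ne_two hp2, mul_zero]
  have hv_double := padicValNat_ascFactorial_add_div_of_lt_sq (p := p) (m := 2 * m) (N := 2 * N)
    (by omega)
  have hv_single := padicValNat_ascFactorial_add_div_of_lt_sq (p := p) (m := m) (N := N) (by omega)
  rw [Nat.ascFactorial_two_mul, padicValNat.mul (by positivity) (Nat.ascFactorial_pos m N).ne',
    padicValNat.mul hO (by positivity), h2, ← mul_add] at hv_double
  omega

theorem padicValRat_natCast_div_two_pow {p : ℕ} [Fact p.Prime] (hp2 : p ≠ 2) (x k : ℕ) :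
    padicValRat p ((x : ℚ) / 2 ^ k) = padicValNat p x := by
  rcases eq_or_ne x 0 with rfl | hx
  · simp
  rw [padicValRat.div (by exact_mod_cast hx) (by positivity), padicValRat.pow,
    show (2 : ℚ) = ((2 : ℕ) : ℚ) by norm_num, padicValRat.of_nat, padicValRat.of_nat,
    padicValNat_two_of_ne_two hp2]
  simp

theorem prod_range_add_natCast_eq_div_two_pow {x : ℚ} {b : ℕ} (hx : 2 * x = b) (N : ℕ) :
    ∏ s ∈ range N, (x + s) = ((∏ s ∈ range N, (b + 2 * s) : ℕ) : ℚ) / 2 ^ N := by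
  rw [eq_div_iff (by positivity), pow_eq_prod_const, ← prod_mul_distrib]
  push_cast
  exact prod_congr rfl fun s _ => by rw [← hx]; ring

theorem Rat.cast_zmod_ne_zero_of_padicValRat_eq_zero {p : ℕ} [hp : Fact p.Prime] {x : ℚ}
    (hx : x ≠ 0) (hv : padicValRat p x = 0) : (x : ZMod p) ≠ 0 := by
  have hnum : x.num.natAbs ≠ 0 := Int.natAbs_ne_zero.mpr (Rat.num_ne_zero.mpr hx)
  have hval : padicValNat p x.num.natAbs = padicValNat p x.den := by
    rw [padicValRat_def, padicValInt] at hv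
    omega
  have hnot_both : ¬(p ∣ x.num.natAbs ∧ p ∣ x.den) := fun ⟨h1, h2⟩ =>
    hp.out.not_dvd_one (x.reduced ▸ Nat.dvd_gcd h1 h2)
  have hden : ¬p ∣ x.den := fun h => hnot_both ⟨(dvd_iff_padicValNat_ne_zero hnum).mpr
      (hval ▸ (dvd_iff_padicValNat_ne_zero x.den_ne_zero).mp h), h⟩
  have hnum' : ¬p ∣ x.num.natAbs := fun h => hnot_both ⟨h, (dvd_iff_padicValNat_ne_zero
      x.den_ne_zero).mpr (hval ▸ (dvd_iff_padicValNat_ne_zero hnum).mp h)⟩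
  rw [Rat.cast_def]
  refine div_ne_zero ?_ ?_
  · rwa [Ne, ZMod.intCast_zmod_eq_zero_iff_dvd, Int.natCast_dvd]
  · rwa [Ne, ZMod.natCast_eq_zero_iff]

theorem div_eq_and_two_mul_div_eq_of_le_add_half {p k x : ℕ} (hp : 0 < p) (hlo : p * k ≤ x)
    (hhi : x ≤ p * k + (p - 1) / 2) : x / p = k ∧ 2 * x / p = 2 * k :=
  ⟨Nat.div_eq_of_lt_le (by rw [mul_comm]; omega) (by rw [add_mul, mul_comm]; omega),
    Nat.div_eq_of_lt_le (by rw [show 2 * k * p = 2 * (p * k) by ring]; omega)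
      (by rw [show (2 * k + 1) * p = 2 * (p * k) + p by ring]; omega)⟩

theorem padicValNat_prod_prod_range_odd_eq_zero {ι : Type*} {p : ℕ} [hp : Fact p.Prime]
    {t : Finset ι} {n : ι → ℕ} (hn : ∀ k ∈ t, 2 * n k < p) :
    padicValNat p (∏ k ∈ t, ∏ s ∈ range (n k), (1 + 2 * s)) = 0 := by
  refine padicValNat.eq_zero_of_not_dvd ?_
  simp only [hp.out.prime.dvd_finsetProd_iff, mem_range, not_exists, not_and]
  exact fun k hk s hs => Nat.not_dvd_of_pos_of_lt (by omega) (by have := hn k hk; omega)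

theorem padicValNat_prod_factorial_eq_zero {ι : Type*} {p : ℕ} [hp : Fact p.Prime]
    {t : Finset ι} {n : ι → ℕ} (hn : ∀ k ∈ t, n k < p) :
    padicValNat p (∏ k ∈ t, (n k)!) = 0 := by
  refine padicValNat.eq_zero_of_not_dvd ?_
  simp only [hp.out.prime.dvd_finsetProd_iff, hp.out.dvd_factorial, not_exists, not_and, not_le]
  exact hn

theorem lauricella_coeff_eq {ι : Type*} [Fintype ι] (n : ι → ℕ) (m : ℕ) {a c : ℚ}
    (ha : 2 * a = ((2 * m + 1 : ℕ) : ℚ)) (hc : c = m + 1) :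
    (∏ s ∈ range (∑ k, n k), (a + s)) * (∏ k, ∏ s ∈ range (n k), ((1 : ℚ) / 2 + s))
        / ((∏ s ∈ range (∑ k, n k), (c + s)) * ∏ k, ((n k)! : ℚ))
      = ((∏ s ∈ range (∑ k, n k), (2 * m + 1 + 2 * s) : ℕ) : ℚ) / 2 ^ (∑ k, n k)
        * (((∏ k, ∏ s ∈ range (n k), (1 + 2 * s) : ℕ) : ℚ) / 2 ^ (∑ k, n k))
        / (((m + 1).ascFactorial (∑ k, n k) : ℕ) * ((∏ k, (n k)! : ℕ) : ℚ)) := by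
  have hhalf : 2 * ((1 : ℚ) / 2) = ((1 : ℕ) : ℚ) := by norm_num
  rw [prod_range_add_natCast_eq_div_two_pow ha,
    prod_congr rfl fun k _ => prod_range_add_natCast_eq_div_two_pow hhalf (n k),
    prod_div_distrib, prod_pow_eq_pow_sum, Nat.ascFactorial_eq_prod_range, hc]
  push_cast
  rfl

theorem lauricella_shifted_degree_eq {p g i j : ℕ} (hodd : Odd p) (hig : i ≤ g) (hjg : j ≤ g)
    (hg : g ≤ (p - 1) / 2) :
    (g - j) + ((p - 1) * (2 * g + 1) / 2 - i * p + j) = p * (g - i) + (p - 1) / 2 := by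
  obtain ⟨q, rfl⟩ := hodd
  obtain ⟨t, rfl⟩ := Nat.exists_eq_add_of_le hig
  obtain ⟨u, rfl⟩ := Nat.exists_eq_add_of_le (show i + t ≤ q by omega)
  simp only [Nat.add_sub_cancel, Nat.add_sub_cancel_left]
  ring_nf
  omega

theorem lauricella_coeff_padic_unit_general (p : ℕ) [hp : Fact p.Prime] (hodd : Odd p)
    (g i j : ℕ) (hg : g ≤ (p - 1) / 2)
    (hig : i ≤ g) (hjg : j ≤ g)
    (a' c' : ℚ) (d' : ℕ)
    (ha' : a' = (g : ℚ) - j + 1 / 2)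
    (hc' : c' = (g : ℚ) - j + 1)
    (hd' : d' = (p - 1) * (2 * g + 1) / 2 - i * p + j)
    (n : Fin (2 * g - 1) → ℕ)
    (hnk : ∀ k, n k ≤ (p - 1) / 2)
    (hlo : d' - (p - 1) / 2 ≤ ∑ k, n k) (hhi : ∑ k, n k ≤ d')
    (A : ℚ)
    (hA : A = (∏ s ∈ Finset.range (∑ k, n k), (a' + s))
            * (∏ k, ∏ s ∈ Finset.range (n k), ((1 : ℚ) / 2 + s))
            / ((∏ s ∈ Finset.range (∑ k, n k), (c' + s)) * ∏ k, ((n k).factorial : ℚ))) :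
    padicValRat p A = 0 ∧ (A : ZMod p) ≠ 0 := by
  have hp2 : p ≠ 2 := by rintro rfl; exact absurd hodd (by decide)
  have hp_two : 2 ≤ p := hp.out.two_le
  set m := g - j
  have hm_cast : (m : ℚ) = g - j := Nat.cast_sub hjg
  have hA' := hA.trans (lauricella_coeff_eq n m (by rw [ha', ← hm_cast]; push_cast; ring)
    (by rw [hc', hm_cast]))
  set N := ∑ k, n k
  have hdeg := lauricella_shifted_degree_eq hodd hig hjg hg
  rw [← hd'] at hdeg
  obtain ⟨hdiv, hdiv2⟩ := div_eq_and_two_mul_div_eq_of_le_add_half (k := g - i) (x := m + N)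
    hp.out.pos (by omega) (by omega)
  have hsq : 2 * (m + N) < p * p := (Nat.div_lt_iff_lt_mul hp.out.pos).mp (by omega)
  have hv_odd := padicValNat_prod_odd_add_div_of_lt_sq hp2 hsq
  have hv_asc := padicValNat_ascFactorial_add_div_of_lt_sq (p := p) (m := m) (N := N) (by omega)
  have hm : m / p = 0 := Nat.div_eq_of_lt (by omega)
  have h2m : 2 * m / p = 0 := Nat.div_eq_of_lt (by omega)
  have hv_half := padicValNat_prod_prod_range_odd_eq_zero (p := p) (t := univ) (n := n)
    fun k _ => by have := hnk k; omega
  have hv_fact := padicValNat_prod_factorial_eq_zero (p := p) (t := univ) (n := n)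
    fun k _ => by have := hnk k; omega
  have hv : padicValRat p A = 0 := by
    rw [hA', padicValRat.div (by positivity) (by positivity),
      padicValRat.mul (by positivity) (by positivity), padicValRat_natCast_div_two_pow hp2,
      padicValRat_natCast_div_two_pow hp2, ← Nat.cast_mul, padicValRat.of_nat,
      padicValNat.mul (Nat.ascFactorial_pos m N).ne' (by positivity), hv_half, hv_fact]
    omega
  exact ⟨hv, Rat.cast_zmod_ne_zero_of_padicValRat_eq_zero (by rw [hA']; positivity) hv⟩

/-- The coefficient `A^{(i,j)}_n = (a')_{|n|} ∏_k (1/2)_{n_k} / ((c')_{|n|} ∏_k n_k!)`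
of the truncated Lauricella series, for `n` in the truncation range, is a `p`-adic unit. -/
theorem lauricella_coeff_padic_unit (p : ℕ) [hp : Fact p.Prime] (hodd : Odd p)
    (g i j : ℕ) (hg1 : 1 ≤ g) (hg : g ≤ (p - 1) / 2)
    (hi1 : 1 ≤ i) (hig : i ≤ g) (hj1 : 1 ≤ j) (hjg : j ≤ g)
    (a' c' : ℚ) (d' : ℕ)
    (ha' : a' = (g : ℚ) - j + 1 / 2)
    (hc' : c' = (g : ℚ) - j + 1)
    (hd' : d' = (p - 1) * (2 * g + 1) / 2 - i * p + j)
    (n : Fin (2 * g - 1) → ℕ)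
    (hnk : ∀ k, n k ≤ (p - 1) / 2)
    (hlo : d' - (p - 1) / 2 ≤ ∑ k, n k) (hhi : ∑ k, n k ≤ d')
    (A : ℚ)
    (hA : A = (∏ s ∈ Finset.range (∑ k, n k), (a' + s))
            * (∏ k, ∏ s ∈ Finset.range (n k), ((1 : ℚ) / 2 + s))
            / ((∏ s ∈ Finset.range (∑ k, n k), (c' + s)) * ∏ k, ((n k).factorial : ℚ))) :
    padicValRat p A = 0 ∧ (A : ZMod p) ≠ 0 :=
  lauricella_coeff_padic_unit_general p (hp := hp) hodd g i j hg hig hjg a' c' d' ha' hc' hd' n hnk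
    hlo hhi A hA
end

section
/- Let p be an odd prime, g ≥ 1, and let c_k ∈ 𝔽_p[z₁,…,z_{2g−1}] be the coefficient of x^k in (x(x−1)(x−z₁)⋯(x−z_{2g−1}))^{(p−1)/2}. Then for all 1 ≤ i ≤ g, 1 ≤ j < g, and 1 ≤ k ≤ 2g−1, the identity z_k ∂_k c_{ip−j} − ((p−1)/2)·c_{ip−j} = ∂_k c_{ip−(j+1)} holds in 𝔽_p[z₁,…,z_{2g−1}]. -/
open MvPolynomial

noncomputable section Aux

variable {R A : Type*} [CommRing R] [CommRing A] [Algebra R A]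

/-- Coefficientwise application of a derivation to a polynomial. -/
noncomputable def Dmap (d : Derivation R A A) (q : Polynomial A) : Polynomial A :=
  PolynomialModule.equivPolynomialSelf (d.mapCoeffs q)

@[simp] lemma Dmap_coeff (d : Derivation R A A) (q : Polynomial A) (n : ℕ) :
    (Dmap d q).coeff n = d (q.coeff n) := rfl

lemma Dmap_mul (d : Derivation R A A) (q r : Polynomial A) :
    Dmap d (q * r) = q * Dmap d r + r * Dmap d q := by
  unfold Dmap
  rw [Derivation.leibniz, map_add, LinearEquiv.map_smul, LinearEquiv.map_smul,
    smul_eq_mul, smul_eq_mul]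

@[simp] lemma Dmap_X (d : Derivation R A A) : Dmap d (Polynomial.X : Polynomial A) = 0 := by
  ext n; simp [Polynomial.coeff_X, apply_ite d]

@[simp] lemma Dmap_one (d : Derivation R A A) : Dmap d (1 : Polynomial A) = 0 := by
  ext n; simp [Polynomial.coeff_one, apply_ite d]

@[simp] lemma Dmap_C (d : Derivation R A A) (a : A) :
    Dmap d (Polynomial.C a) = Polynomial.C (d a) := by
  ext n; simp [Polynomial.coeff_C, apply_ite d]

lemma Dmap_sub (d : Derivation R A A) (q r : Polynomial A) :
    Dmap d (q - r) = Dmap d q - Dmap d r := by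
  ext n; simp

variable {σ : Type*} [Fintype σ] [DecidableEq σ]

set_option maxHeartbeats 1000000 in
lemma aux_key (k : σ) (m : ℕ) (hm : 1 ≤ m) :
    (Polynomial.X - Polynomial.C (MvPolynomial.X k)) *
      Dmap (pderiv k) ((Polynomial.X * (Polynomial.X - 1)
          * ∏ t : σ, (Polynomial.X - Polynomial.C (MvPolynomial.X t))
        : Polynomial (MvPolynomial σ R)) ^ m)
    + Polynomial.C (MvPolynomial.C ((m : ℕ) : R)) *
        (Polynomial.X * (Polynomial.X - 1)
          * ∏ t : σ, (Polynomial.X - Polynomial.C (MvPolynomial.X t))) ^ m = 0 := by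
  set f : Polynomial (MvPolynomial σ R) := Polynomial.X * (Polynomial.X - 1)
      * ∏ t : σ, (Polynomial.X - Polynomial.C (MvPolynomial.X t)) with hf
  set h : Polynomial (MvPolynomial σ R) := Polynomial.X * (Polynomial.X - 1)
      * ∏ t ∈ Finset.univ.erase k, (Polynomial.X - Polynomial.C (MvPolynomial.X t)) with hh
  have hfac : f = (Polynomial.X - Polynomial.C (MvPolynomial.X k)) * h := by
    rw [hf, hh, ← Finset.mul_prod_erase Finset.univ _ (Finset.mem_univ k)]
    ring
  have hDh : Dmap (pderiv k) h = 0 := by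
    have hprod : Dmap (pderiv (R := R) k) (∏ t ∈ Finset.univ.erase k,
        (Polynomial.X - Polynomial.C (MvPolynomial.X t))) = 0 := by
      refine Finset.prod_induction _ (fun q => Dmap (pderiv k) q = 0)
        (fun a b ha hb => by
          show Dmap (pderiv k) (a * b) = 0
          rw [Dmap_mul, ha, hb]; ring) (Dmap_one _) ?_
      intro t ht
      rw [Dmap_sub, Dmap_X, Dmap_C, pderiv_X_of_ne (Finset.ne_of_mem_erase ht)]
      simp
    rw [hh, Dmap_mul, Dmap_mul, Dmap_sub, Dmap_X, Dmap_one, hprod]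
    ring
  have hDf : Dmap (pderiv (R := R) k) f = -h := by
    rw [hfac, Dmap_mul, hDh, Dmap_sub, Dmap_X, Dmap_C, pderiv_X_self]
    simp
  obtain ⟨m', rfl⟩ : ∃ m', m = m' + 1 := ⟨m - 1, by omega⟩
  have hpow : ∀ n : ℕ, Dmap (pderiv (R := R) k) (f ^ (n + 1))
      = ((n + 1 : ℕ) : Polynomial (MvPolynomial σ R)) * f ^ n * Dmap (pderiv k) f := by
    intro n
    induction n with
    | zero => simp
    | succ n ih =>
      rw [pow_succ, Dmap_mul, ih, hDf]
      push_cast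
      ring
  have hcast : Polynomial.C (MvPolynomial.C (((m' + 1 : ℕ) : ℕ) : R))
      = (((m' + 1 : ℕ) : ℕ) : Polynomial (MvPolynomial σ R)) := by simp
  rw [hpow, hDf, hfac, hcast]
  push_cast
  ring

lemma aux_rel (k : σ) (m : ℕ) (hm : 1 ≤ m) (n : ℕ) :
    MvPolynomial.X k * pderiv k (Polynomial.coeff
        ((Polynomial.X * (Polynomial.X - 1)
            * ∏ t : σ, (Polynomial.X - Polynomial.C (MvPolynomial.X t))
          : Polynomial (MvPolynomial σ R)) ^ m) (n + 1))
      - MvPolynomial.C ((m : ℕ) : R) * Polynomial.coeff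
        ((Polynomial.X * (Polynomial.X - 1)
            * ∏ t : σ, (Polynomial.X - Polynomial.C (MvPolynomial.X t))) ^ m) (n + 1)
      = pderiv k (Polynomial.coeff
        ((Polynomial.X * (Polynomial.X - 1)
            * ∏ t : σ, (Polynomial.X - Polynomial.C (MvPolynomial.X t))) ^ m) n) := by
  have hkey := aux_key (R := R) k m hm
  have := congrArg (fun q => Polynomial.coeff q (n + 1)) hkey
  simp only [sub_mul, Polynomial.coeff_add, Polynomial.coeff_sub,
    Polynomial.coeff_X_mul, Polynomial.coeff_C_mul, Dmap_coeff,
    Polynomial.coeff_zero] at this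
  linear_combination -this

lemma aux_zero (m : ℕ) (hm : 1 ≤ m) :
    Polynomial.coeff ((Polynomial.X * (Polynomial.X - 1)
        * ∏ t : σ, (Polynomial.X - Polynomial.C (MvPolynomial.X t))
      : Polynomial (MvPolynomial σ R)) ^ m) 0 = 0 := by
  rw [Polynomial.coeff_zero_eq_eval_zero]
  rw [Polynomial.eval_pow]
  simp only [Polynomial.eval_mul, Polynomial.eval_X, zero_mul]
  exact zero_pow (by omega)

end Aux

/-- First contiguity relation for the entries of the Cartier–Manin matrix:
`z_k ∂_k c_{ip−j} − ((p−1)/2)·c_{ip−j} = ∂_k c_{ip−(j+1)}`. -/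
theorem contiguity_relation_one (p : ℕ) (hp : p.Prime) (hodd : Odd p)
    (g : ℕ) (hg : 1 ≤ g)
    (c : ℕ → MvPolynomial (Fin (2 * g - 1)) (ZMod p))
    (hc : ∀ k : ℕ, c k = Polynomial.coeff
      ((Polynomial.X * (Polynomial.X - 1)
          * ∏ t : Fin (2 * g - 1), (Polynomial.X - Polynomial.C (MvPolynomial.X t))
        : Polynomial (MvPolynomial (Fin (2 * g - 1)) (ZMod p))) ^ ((p - 1) / 2)) k)
    (i j : ℕ) (hi1 : 1 ≤ i) (hig : i ≤ g) (hj1 : 1 ≤ j) (hjg : j < g)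
    (k : Fin (2 * g - 1)) :
    MvPolynomial.X k * pderiv k (c (i * p - j))
        - MvPolynomial.C ((((p - 1) / 2 : ℕ)) : ZMod p) * c (i * p - j)
      = pderiv k (c (i * p - (j + 1))) := by
  have hp3 : 3 ≤ p := by
    obtain ⟨t, ht⟩ := hodd
    have := hp.two_le
    omega
  have hm1 : 1 ≤ (p - 1) / 2 := by omega
  by_cases hn : 1 ≤ i * p - j
  · obtain ⟨n', hn'⟩ : ∃ n', i * p - j = n' + 1 := ⟨i * p - j - 1, by omega⟩
    have hn2 : i * p - (j + 1) = n' := by omega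
    rw [hc, hc, hn', hn2]
    exact aux_rel k _ hm1 n'
  · have h1 : i * p - j = 0 := by omega
    have h2 : i * p - (j + 1) = 0 := by omega
    rw [hc, hc, h1, h2, aux_zero _ hm1]
    simp
end

section
/- Let p be an odd prime, g ≥ 1, m = (p−1)/2, and c_k as above (coefficient of x^k in (x(x−1)(x−z₁)⋯(x−z_{2g−1}))^m). Then for 1 ≤ i ≤ g and 1 ≤ j < g, one has ∑_{k=1}^{2g−1} (z_k − 1)∂_k c_{ip−(j+1)} = (m − j + 1)·c_{ip−j} + (m − g + j + 1)·c_{ip−(j+1)} in 𝔽_p[z₁,…,z_{2g−1}]. -/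
/-!
Let `D = ∑ₖ (zₖ - 1) ∂ₖ`, acting on polynomials in `x` coefficientwise, and
`f = x (x - 1) ∏ₖ (x - zₖ)`. The derivation `θ = x D + x (x - 1) d/dx` multiplies every linear
factor of `f` by `x`: `θ (x - zₖ) = x (x - zₖ)` because `D zₖ = zₖ - 1`, and `θ x`, `θ (x - 1)`
are `x (x - 1)`. Hence `θ f = ((N + 2) x - 1) f` with `N = 2g - 1`, and
`θ (f ^ m) = m ((N + 2) x - 1) f ^ m`. Comparing coefficients of `x ^ (n + 1)` gives
`D c_n = (n + 1 - m) c_{n+1} + (m (N + 2) - n) c_n`; for `n = ip - j - 1` this is the claim,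
since `n ≡ -(j + 1)` and `2m ≡ -1` mod `p`.
-/

open MvPolynomial
open Polynomial hiding X C

section Hyperelliptic

variable {A ι : Type*} [CommRing A]

noncomputable def hyperellipticPoly (s : Finset ι) (a : ι → A) : A[X] :=
  Polynomial.X * (Polynomial.X - 1) * ∏ i ∈ s, (Polynomial.X - Polynomial.C (a i))

lemma coeff_zero_hyperellipticPoly_pow (s : Finset ι) (a : ι → A) {m : ℕ} (hm : m ≠ 0) :
    (hyperellipticPoly s a ^ m).coeff 0 = 0 := by
  rw [Polynomial.coeff_zero_eq_eval_zero, Polynomial.eval_pow, hyperellipticPoly]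
  simp [zero_pow hm]

end Hyperelliptic

namespace Derivation

variable {R A : Type*} [CommRing R] [CommRing A] [Algebra R A]

lemma leibniz_prod_of_apply_eq_mul {ι : Type*} (D : Derivation R A A)
    (s : Finset ι) (a u : ι → A) (h : ∀ i ∈ s, D (a i) = u i * a i) :
    D (∏ i ∈ s, a i) = (∑ i ∈ s, u i) * ∏ i ∈ s, a i := by
  classical
  induction s using Finset.induction with
  | empty => simp
  | insert i s hi ih =>
    rw [Finset.prod_insert hi, Finset.sum_insert hi, leibniz, smul_eq_mul, smul_eq_mul,
      h i (Finset.mem_insert_self i s), ih fun j hj => h j (Finset.mem_insert_of_mem hj)]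
    ring

lemma apply_pow_of_apply_eq_mul {D : Derivation R A A} {a u : A} (h : D a = u * a) (m : ℕ) :
    D (a ^ m) = (m * u) * a ^ m := by
  cases m with
  | zero => simp
  | succ m =>
    rw [leibniz_pow, h, pow_succ a m, nsmul_eq_mul, smul_eq_mul]
    push_cast
    ring

noncomputable def mapCoeffsSelf (d : Derivation R A A) : Derivation R A[X] A[X] :=
  PolynomialModule.equivPolynomialSelf.compDer d.mapCoeffs

noncomputable def eulerLift (d : Derivation R A A) : Derivation R A[X] A[X] :=
  (Polynomial.X : A[X]) • d.mapCoeffsSelf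
    + (Polynomial.X ^ 2 - Polynomial.X : A[X]) • (derivative' (R := A)).restrictScalars R

variable (d : Derivation R A A)

@[simp]
lemma coeff_mapCoeffsSelf (q : A[X]) (n : ℕ) :
    (d.mapCoeffsSelf q).coeff n = d (q.coeff n) := rfl

@[simp]
lemma mapCoeffsSelf_C (a : A) : d.mapCoeffsSelf (Polynomial.C a) = Polynomial.C (d a) := by
  ext n; simp [Polynomial.coeff_C, apply_ite d]

@[simp]
lemma mapCoeffsSelf_X : d.mapCoeffsSelf (Polynomial.X : A[X]) = 0 := by
  ext n; simp [Polynomial.coeff_X, apply_ite d]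

lemma eulerLift_apply (q : A[X]) :
    d.eulerLift q = Polynomial.X * d.mapCoeffsSelf q
      + (Polynomial.X ^ 2 - Polynomial.X) * derivative q := by
  simp [eulerLift]

lemma eulerLift_X : d.eulerLift Polynomial.X = (Polynomial.X - 1) * Polynomial.X := by
  rw [eulerLift_apply, mapCoeffsSelf_X, derivative_X]
  ring

lemma eulerLift_X_sub_one :
    d.eulerLift (Polynomial.X - 1) = Polynomial.X * (Polynomial.X - 1) := by
  rw [map_sub, map_one_eq_zero, eulerLift_X]
  ring

lemma eulerLift_X_sub_C {a : A} (ha : d a = a - 1) :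
    d.eulerLift (Polynomial.X - Polynomial.C a)
      = Polynomial.X * (Polynomial.X - Polynomial.C a) := by
  rw [eulerLift_apply, map_sub, mapCoeffsSelf_C, mapCoeffsSelf_X, ha]
  simp only [derivative_X, derivative_C, map_sub, map_one]
  ring

lemma coeff_eulerLift_succ (q : A[X]) (n : ℕ) :
    (d.eulerLift q).coeff (n + 1)
      = d (q.coeff n) + n * q.coeff n - (n + 1) * q.coeff (n + 1) := by
  have hXq : ∀ k : ℕ, (Polynomial.X * derivative q).coeff k = k * q.coeff k := by
    rintro (_ | k)
    · simp
    · rw [Polynomial.coeff_X_mul, coeff_derivative]; push_cast; ring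
  rw [eulerLift_apply, sub_mul, pow_two, mul_assoc, Polynomial.coeff_add, Polynomial.coeff_sub,
    Polynomial.coeff_X_mul, Polynomial.coeff_X_mul, hXq, hXq, coeff_mapCoeffsSelf]
  push_cast; ring

lemma eulerLift_hyperellipticPoly {ι : Type*} (s : Finset ι) (a : ι → A)
    (ha : ∀ i ∈ s, d (a i) = a i - 1) :
    d.eulerLift (hyperellipticPoly s a)
      = ((s.card + 2 : A[X]) * Polynomial.X - 1) * hyperellipticPoly s a := by
  have hprod := d.eulerLift.leibniz_prod_of_apply_eq_mul s _ (fun _ ↦ Polynomial.X)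
    fun i hi ↦ d.eulerLift_X_sub_C (ha i hi)
  rw [hyperellipticPoly, leibniz, leibniz, hprod, eulerLift_X, eulerLift_X_sub_one,
    Finset.sum_const, nsmul_eq_mul, smul_eq_mul, smul_eq_mul, smul_eq_mul]
  ring

lemma apply_coeff_hyperellipticPoly_pow {ι : Type*} (s : Finset ι) (a : ι → A)
    (ha : ∀ i ∈ s, d (a i) = a i - 1) (m n : ℕ) :
    d ((hyperellipticPoly s a ^ m).coeff n)
      = (n + 1 - m) * (hyperellipticPoly s a ^ m).coeff (n + 1)
        + (m * (s.card + 2) - n) * (hyperellipticPoly s a ^ m).coeff n := by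
  have h := congrArg (Polynomial.coeff · (n + 1))
    (d.eulerLift.apply_pow_of_apply_eq_mul (d.eulerLift_hyperellipticPoly s a ha) m)
  have hmul : (m : A[X]) * ((s.card + 2 : A[X]) * Polynomial.X - 1)
      = Polynomial.C (m * (s.card + 2 : A)) * Polynomial.X - Polynomial.C (m : A) := by
    simp only [map_mul, map_add, map_ofNat, Polynomial.C_eq_natCast]; ring
  rw [hmul, sub_mul, mul_assoc, Polynomial.coeff_sub, Polynomial.coeff_C_mul,
    Polynomial.coeff_C_mul, Polynomial.coeff_X_mul, coeff_eulerLift_succ] at h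
  linear_combination h

end Derivation

namespace MvPolynomial

variable {σ R : Type*} [CommRing R] [Fintype σ]

noncomputable def shiftedEulerDerivation : Derivation R (MvPolynomial σ R) (MvPolynomial σ R) :=
  ∑ k, (X k - 1 : MvPolynomial σ R) • pderiv k

lemma shiftedEulerDerivation_apply (q : MvPolynomial σ R) :
    shiftedEulerDerivation q = ∑ k, (X k - 1) * pderiv k q := by
  rw [shiftedEulerDerivation, ← Derivation.coeFnAddMonoidHom_apply, map_sum, Finset.sum_apply]
  rfl

lemma shiftedEulerDerivation_X (t : σ) :
    shiftedEulerDerivation (X t : MvPolynomial σ R) = X t - 1 := by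
  classical
  simp [shiftedEulerDerivation_apply, pderiv_X, Pi.single_apply]

lemma sum_X_sub_one_mul_pderiv_coeff_hyperellipticPoly_pow (m n : ℕ) :
    ∑ k, (X k - 1) * pderiv k ((hyperellipticPoly Finset.univ X ^ m).coeff n)
      = C ((n : R) + 1 - m)
          * (hyperellipticPoly Finset.univ (X : σ → MvPolynomial σ R) ^ m).coeff (n + 1)
        + C ((m : R) * (Fintype.card σ + 2) - n)
          * (hyperellipticPoly Finset.univ (X : σ → MvPolynomial σ R) ^ m).coeff n := by
  rw [← shiftedEulerDerivation_apply, shiftedEulerDerivation.apply_coeff_hyperellipticPoly_pow _ _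
    (fun t _ ↦ shiftedEulerDerivation_X t) m n]
  simp [map_ofNat]

end MvPolynomial

theorem contiguity_relation_two_general (p : ℕ) (hp : p.Prime) (hodd : Odd p)
    (g : ℕ) (m : ℕ) (hm : m = (p - 1) / 2)
    (c : ℕ → MvPolynomial (Fin (2 * g - 1)) (ZMod p))
    (hc : ∀ k : ℕ, c k = Polynomial.coeff
      ((Polynomial.X * (Polynomial.X - 1)
          * ∏ t : Fin (2 * g - 1), (Polynomial.X - Polynomial.C (MvPolynomial.X t))
        : Polynomial (MvPolynomial (Fin (2 * g - 1)) (ZMod p))) ^ m) k)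
    (i j : ℕ) (hjg : j < g) :
    ∑ k : Fin (2 * g - 1),
        (MvPolynomial.X k - 1) * pderiv k (c (i * p - (j + 1)))
      = MvPolynomial.C ((m : ZMod p) - (j : ZMod p) + 1) * c (i * p - j)
        + MvPolynomial.C ((m : ZMod p) - (g : ZMod p) + (j : ZMod p) + 1)
          * c (i * p - (j + 1)) := by
  replace hc : ∀ k, c k = (hyperellipticPoly Finset.univ X ^ m).coeff k := hc
  have hm0 : m ≠ 0 := by
    obtain ⟨k, rfl⟩ := id hodd
    have := hp.two_le
    omega
  rcases lt_or_ge (i * p) (j + 1) with hlt | hle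
  · have hc0 : c 0 = 0 := (hc 0).trans (coeff_zero_hyperellipticPoly_pow _ _ hm0)
    simp [Nat.sub_eq_zero_of_le hlt.le, Nat.sub_eq_zero_of_le (Nat.le_of_lt_succ hlt), hc0]
  obtain ⟨n, hn⟩ := Nat.exists_eq_add_of_le' hle
  have hn' : (n : ZMod p) = -(j + 1) := by
    have := congrArg (Nat.cast : ℕ → ZMod p) hn
    push_cast [ZMod.natCast_self] at this
    linear_combination -this
  have h2m : 2 * (m : ZMod p) = -1 := by
    have h : 2 * m + 1 = p := by
      obtain ⟨k, rfl⟩ := hodd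
      omega
    have := congrArg (Nat.cast : ℕ → ZMod p) h
    push_cast [ZMod.natCast_self] at this
    linear_combination this
  rw [hn, Nat.add_sub_cancel, show n + (j + 1) - j = n + 1 by omega, hc, hc,
    sum_X_sub_one_mul_pderiv_coeff_hyperellipticPoly_pow, Fintype.card_fin,
    Nat.cast_sub (by omega : 1 ≤ 2 * g), hn']
  congr 3
  · linear_combination -h2m
  · push_cast
    linear_combination (g : ZMod p) * h2m

/-- Second contiguity relation for the entries of the Cartier–Manin matrix:
`∑_k (z_k − 1)∂_k c_{ip−(j+1)} = (m − j + 1)·c_{ip−j} + (m − g + j + 1)·c_{ip−(j+1)}`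
with `m = (p−1)/2`, the coefficients being taken in `𝔽_p`. -/
theorem contiguity_relation_two (p : ℕ) (hp : p.Prime) (hodd : Odd p)
    (g : ℕ) (hg : 1 ≤ g) (m : ℕ) (hm : m = (p - 1) / 2)
    (c : ℕ → MvPolynomial (Fin (2 * g - 1)) (ZMod p))
    (hc : ∀ k : ℕ, c k = Polynomial.coeff
      ((Polynomial.X * (Polynomial.X - 1)
          * ∏ t : Fin (2 * g - 1), (Polynomial.X - Polynomial.C (MvPolynomial.X t))
        : Polynomial (MvPolynomial (Fin (2 * g - 1)) (ZMod p))) ^ m) k)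
    (i j : ℕ) (hi1 : 1 ≤ i) (hig : i ≤ g) (hj1 : 1 ≤ j) (hjg : j < g) :
    ∑ k : Fin (2 * g - 1),
        (MvPolynomial.X k - 1) * pderiv k (c (i * p - (j + 1)))
      = MvPolynomial.C ((m : ZMod p) - (j : ZMod p) + 1) * c (i * p - j)
        + MvPolynomial.C ((m : ZMod p) - (g : ZMod p) + (j : ZMod p) + 1)
          * c (i * p - (j + 1)) :=
  contiguity_relation_two_general p hp hodd g m hm c hc i j hjg
end

section
/- Let p be an odd prime, g ≥ 1 with g ≤ (p−1)/2, 1 ≤ i ≤ g, 1 ≤ j ≤ g. Let c_{ip−j} ∈ 𝔽_p[z₁,…,z_{2g−1}] be the coefficient of x^{ip−j} in (x(x−1)∏_{k=1}^{2g−1}(x−z_k))^{(p−1)/2}. Then c_{ip−j} is annihilated by the operator E_{ℓm} = (z_ℓ − z_m)∂_ℓ∂_m + (1/2)∂_m − (1/2)∂_ℓ for all 1 ≤ ℓ < m ≤ 2g−1, where 1/2 = (p+1)/2 ∈ 𝔽_p. -/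
/-!
Write `P = x(x-1)∏ₖ(x - z_k)` and let `∂_k` act on `𝔽_p[z][x]` coefficientwise. Since
`P = (x - z_k) Q_k` with `∂_k Q_k = 0`, the power `f = P^n` satisfies the Euler-type relations
`(x - z_k) ∂_k f = -n f`. Differentiating the relation for `m` by `∂_ℓ`, the one for `ℓ` by `∂_m`,
and subtracting gives `(z_ℓ - z_m) ∂_ℓ∂_m f = -n (∂_ℓ f - ∂_m f)`, and `-n = 1/2` in `𝔽_p` when
`n = (p-1)/2`. The identity holds for every coefficient of `f`, in particular for `c_{ip-j}`.
-/

open Polynomial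

namespace Derivation

variable {R A : Type*} [CommRing R] [CommRing A] [Algebra R A]

noncomputable def coeffwise (d : Derivation R A A) : Derivation R A[X] A[X] :=
  PolynomialModule.equivPolynomialSelf.compDer d.mapCoeffs

variable (d : Derivation R A A)

@[simp]
lemma coeff_coeffwise (f : A[X]) (k : ℕ) : (d.coeffwise f).coeff k = d (f.coeff k) := rfl

@[simp]
lemma coeffwise_X : d.coeffwise (X : A[X]) = 0 := by
  ext k
  simp [Polynomial.coeff_X, apply_ite d]

@[simp]
lemma coeffwise_C (a : A) : d.coeffwise (Polynomial.C a) = Polynomial.C (d a) := by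
  ext k
  simp [Polynomial.coeff_C, apply_ite d]

lemma coeffwise_comm {d₁ d₂ : Derivation R A A} (h : ∀ a, d₁ (d₂ a) = d₂ (d₁ a)) (f : A[X]) :
    d₁.coeffwise (d₂.coeffwise f) = d₂.coeffwise (d₁.coeffwise f) := by
  ext k
  simp [h]

lemma mul_apply_pow_of_mul_apply {D : Derivation R A A} {x u : A} {c : R}
    (h : x * D u = c • u) (n : ℕ) : x * D (u ^ n) = (n * c) • u ^ n := by
  cases n with
  | zero => simp
  | succ n =>
    have hpow : x * D (u ^ (n + 1)) = (n + 1 : A) * u ^ n * (x * D u) := by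
      rw [leibniz_pow, Nat.add_sub_cancel, nsmul_eq_mul, smul_eq_mul]
      push_cast
      ring
    rw [hpow, h, Algebra.smul_def, Algebra.smul_def]
    push_cast
    ring

lemma sub_mul_apply_apply_add_smul_sub_smul_eq_zero {D₁ D₂ : Derivation R A A} {a b f : A}
    {h : R} (hcomm : D₁ (D₂ f) = D₂ (D₁ f)) (ha : D₂ a = 0) (hb : D₁ b = 0)
    (hfa : a * D₁ f = h • f) (hfb : b * D₂ f = h • f) :
    (b - a) * D₁ (D₂ f) + h • D₂ f - h • D₁ f = 0 := by
  have hb' : b * D₁ (D₂ f) = h • D₁ f := by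
    simpa [leibniz, hb, map_smul] using congrArg D₁ hfb
  have ha' : a * D₂ (D₁ f) = h • D₂ f := by
    simpa [leibniz, ha, map_smul] using congrArg D₂ hfa
  rw [sub_mul, hb', hcomm, ha']
  abel

end Derivation

namespace MvPolynomial

variable {σ R : Type*} [CommRing R]

lemma pderiv_pderiv_comm (i j : σ) (f : MvPolynomial σ R) :
    pderiv i (pderiv j f) = pderiv j (pderiv i f) := by
  classical
  have : ⁅(pderiv i : Derivation R (MvPolynomial σ R) (MvPolynomial σ R)), pderiv j⁆ = 0 :=
    derivation_ext fun k => by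
      change pderiv i (pderiv j (X k : MvPolynomial σ R)) - pderiv j (pderiv i (X k)) = 0
      simp [pderiv_X, Pi.single_apply, apply_ite]
  exact sub_eq_zero.mp (Derivation.congr_fun this f)

variable (σ R) [Fintype σ]

noncomputable def rosenhainPoly : (MvPolynomial σ R)[X] :=
  Polynomial.X * (Polynomial.X - 1) * ∏ s : σ, (Polynomial.X - Polynomial.C (X s))

variable {σ R}

lemma exists_rosenhainPoly_eq_mul_coeffwise_pderiv_eq_zero (t : σ) :
    ∃ Q, rosenhainPoly σ R = (Polynomial.X - Polynomial.C (X t)) * Q ∧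
      (pderiv t).coeffwise Q = 0 := by
  classical
  refine ⟨Polynomial.X * (Polynomial.X - 1) *
      ∏ s ∈ Finset.univ.erase t, (Polynomial.X - Polynomial.C (X s)), ?_, ?_⟩
  · rw [rosenhainPoly, ← Finset.mul_prod_erase _ _ (Finset.mem_univ t)]
    ring
  have hprod : (pderiv t).coeffwise
      (∏ s ∈ Finset.univ.erase t, (Polynomial.X - Polynomial.C (X s))) = 0 :=
    Finset.prod_induction _ (fun q : (MvPolynomial σ R)[X] => (pderiv t).coeffwise q = 0)
      (fun _ _ ha hb => by simp [Derivation.leibniz, ha, hb]) (Derivation.map_one_eq_zero _)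
      fun s hs => by simp [pderiv_X_of_ne (Finset.ne_of_mem_erase hs)]
  simp [Derivation.leibniz, hprod]

lemma X_sub_C_mul_coeffwise_pderiv_rosenhainPoly_pow (t : σ) (n : ℕ) :
    (Polynomial.X - Polynomial.C (X t)) * (pderiv t).coeffwise (rosenhainPoly σ R ^ n) =
      (-n : R) • rosenhainPoly σ R ^ n := by
  obtain ⟨Q, hP, hQ⟩ := exists_rosenhainPoly_eq_mul_coeffwise_pderiv_eq_zero (R := R) t
  have hEuler : (Polynomial.X - Polynomial.C (X t)) *
      (pderiv t).coeffwise ((Polynomial.X - Polynomial.C (X t)) * Q) =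
        (-1 : R) • ((Polynomial.X - Polynomial.C (X t)) * Q) := by
    simp [Derivation.leibniz, hQ]
  rw [hP]
  simpa using Derivation.mul_apply_pow_of_mul_apply hEuler n

end MvPolynomial

open MvPolynomial

theorem cartier_manin_annihilated_by_Elm_general (p : ℕ) (hodd : Odd p) (g : ℕ)
    (c : ℕ → MvPolynomial (Fin (2 * g - 1)) (ZMod p))
    (hc : ∀ k : ℕ, c k = Polynomial.coeff
      ((Polynomial.X * (Polynomial.X - 1)
          * ∏ t : Fin (2 * g - 1), (Polynomial.X - Polynomial.C (MvPolynomial.X t))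
        : Polynomial (MvPolynomial (Fin (2 * g - 1)) (ZMod p))) ^ ((p - 1) / 2)) k)
    (i j : ℕ) (ℓ m : Fin (2 * g - 1)) (hlm : ℓ < m) :
    (MvPolynomial.X ℓ - MvPolynomial.X m) * pderiv ℓ (pderiv m (c (i * p - j)))
        + MvPolynomial.C ((((p + 1) / 2 : ℕ)) : ZMod p) * pderiv m (c (i * p - j))
        - MvPolynomial.C ((((p + 1) / 2 : ℕ)) : ZMod p) * pderiv ℓ (c (i * p - j))
      = 0 := by
  set h : ZMod p := (((p + 1) / 2 : ℕ) : ZMod p)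
  have hh : (-((p - 1) / 2 : ℕ) : ZMod p) = h := by
    obtain ⟨w, rfl⟩ := hodd
    rw [neg_eq_iff_add_eq_zero, ← Nat.cast_add,
      show (2 * w + 1 - 1) / 2 + (2 * w + 1 + 1) / 2 = 2 * w + 1 by omega, ZMod.natCast_self]
  have hE := Derivation.sub_mul_apply_apply_add_smul_sub_smul_eq_zero
    (Derivation.coeffwise_comm (pderiv_pderiv_comm ℓ m) _)
    (by simp [pderiv_X_of_ne hlm.ne]) (by simp [pderiv_X_of_ne hlm.ne'])
    (hh ▸ X_sub_C_mul_coeffwise_pderiv_rosenhainPoly_pow ℓ _)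
    (hh ▸ X_sub_C_mul_coeffwise_pderiv_rosenhainPoly_pow m _)
  have hba : (Polynomial.X - Polynomial.C (X m)) - (Polynomial.X - Polynomial.C (X ℓ))
      = Polynomial.C (X ℓ - X m : MvPolynomial (Fin (2 * g - 1)) (ZMod p)) := by
    rw [Polynomial.C_sub]
    ring
  have hcoeff := congrArg (Polynomial.coeff · (i * p - j)) (hba ▸ hE)
  simp only [Polynomial.coeff_add, Polynomial.coeff_sub, Polynomial.coeff_C_mul,
    Polynomial.coeff_smul, Derivation.coeff_coeffwise, MvPolynomial.smul_eq_C_mul,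
    Polynomial.coeff_zero] at hcoeff
  rw [hc]
  exact hcoeff

/-- The Cartier–Manin entry `c_{ip−j}` is annihilated by the operator
`E_{ℓm} = (z_ℓ − z_m)∂_ℓ∂_m + (1/2)∂_m − (1/2)∂_ℓ` for all `ℓ < m`,
where `1/2 = (p+1)/2` in `𝔽_p`. -/
theorem cartier_manin_annihilated_by_Elm (p : ℕ) (hp : p.Prime) (hodd : Odd p)
    (g : ℕ) (hg1 : 1 ≤ g) (hg : g ≤ (p - 1) / 2)
    (c : ℕ → MvPolynomial (Fin (2 * g - 1)) (ZMod p))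
    (hc : ∀ k : ℕ, c k = Polynomial.coeff
      ((Polynomial.X * (Polynomial.X - 1)
          * ∏ t : Fin (2 * g - 1), (Polynomial.X - Polynomial.C (MvPolynomial.X t))
        : Polynomial (MvPolynomial (Fin (2 * g - 1)) (ZMod p))) ^ ((p - 1) / 2)) k)
    (i j : ℕ) (hi1 : 1 ≤ i) (hig : i ≤ g) (hj1 : 1 ≤ j) (hjg : j ≤ g)
    (ℓ m : Fin (2 * g - 1)) (hlm : ℓ < m) :
    (MvPolynomial.X ℓ - MvPolynomial.X m) * pderiv ℓ (pderiv m (c (i * p - j)))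
        + MvPolynomial.C ((((p + 1) / 2 : ℕ)) : ZMod p) * pderiv m (c (i * p - j))
        - MvPolynomial.C ((((p + 1) / 2 : ℕ)) : ZMod p) * pderiv ℓ (c (i * p - j))
      = 0 :=
  cartier_manin_annihilated_by_Elm_general p hodd g c hc i j ℓ m hlm
end

section
/- Let p be an odd prime, g ≥ 1, and for 1 ≤ i ≤ g, 1 ≤ j ≤ g let c_{ip−j} ∈ 𝔽_p[z₁,…,z_{2g−1}] be the coefficient of x^{ip−j} in (x(x−1)∏_{k=1}^{2g−1}(x−z_k))^{(p−1)/2}. Then for fixed j, the supports (sets of exponent tuples of monomials with nonzero coefficient) of c_{p−j}, c_{2p−j}, …, c_{gp−j} are such that the maximal total degree of c_{(i+1)p−j} is strictly less than the minimal total degree of c_{ip−j} for each 1 ≤ i ≤ g−1; in fact the gap is (p+1)/2. In particular, if c_{p−j},…,c_{gp−j} are all nonzero, they are linearly independent over 𝔽_p. -/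
/-!
Count `X` as one more variable. Each factor of `X * (X - 1) * ∏ t, (X - z t)` has only terms of
total degree `1`, except `X - 1`, whose terms have degree `0` or `1`. Hence all terms
`X ^ k * z ^ d` of its `n`-th power, `n = (p - 1) / 2`, have total degree `k + |d|` in an interval
of length `n`, so the `z`-degrees of the coefficients of `X ^ k` and `X ^ (k + p)` are separated by
at least `p - n = (p + 1) / 2`. In particular these coefficients have disjoint supports, which
makes nonzero ones linearly independent.
-/

open MvPolynomial

/-- Polynomials in `X` over `R[σ]` all of whose terms `X ^ k * z ^ d` have total degree
`k + |d|` in `[a, b]`, i.e. counting `X` as one more variable. -/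
def totalDegreeIcc (σ R : Type*) [CommSemiring R] (a b : ℕ) :
    Submodule R (Polynomial (MvPolynomial σ R)) where
  carrier := {P | ∀ k, ∀ d ∈ (P.coeff k).support, d.degree + k ∈ Set.Icc a b}
  zero_mem' := by simp
  add_mem' := by
    classical
    intro P Q hP hQ k d hd
    rw [Polynomial.coeff_add] at hd
    rcases Finset.mem_union.1 (support_add hd) with hd | hd
    exacts [hP k d hd, hQ k d hd]
  smul_mem' r P hP k d hd := by
    rw [Polynomial.coeff_smul] at hd
    exact hP k d (support_smul hd)

namespace totalDegreeIcc

variable {σ R : Type*} [CommSemiring R]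

theorem mono {a b a' b' : ℕ} (ha : a' ≤ a) (hb : b ≤ b') :
    totalDegreeIcc σ R a b ≤ totalDegreeIcc σ R a' b' :=
  fun _ hP k d hd => Set.Icc_subset_Icc ha hb (hP k d hd)

theorem monomial_mem {a b k : ℕ} {d : σ →₀ ℕ} (r : R) (h : d.degree + k ∈ Set.Icc a b) :
    Polynomial.monomial k (monomial d r) ∈ totalDegreeIcc σ R a b := by
  classical
  intro k' d' hd'
  rw [Polynomial.coeff_monomial] at hd'
  split_ifs at hd' with hk
  · subst hk
    rw [Finset.mem_singleton.1 (support_monomial_subset hd')]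
    exact h
  · simp at hd'

theorem one_mem : (1 : Polynomial (MvPolynomial σ R)) ∈ totalDegreeIcc σ R 0 0 := by
  rw [← Polynomial.monomial_zero_one, one_def]
  exact monomial_mem 1 (by simp)

theorem X_mem : (Polynomial.X : Polynomial (MvPolynomial σ R)) ∈ totalDegreeIcc σ R 1 1 := by
  rw [← Polynomial.monomial_one_one_eq_X, one_def]
  exact monomial_mem 1 (by simp)

theorem C_X_mem (t : σ) :
    Polynomial.C (X t : MvPolynomial σ R) ∈ totalDegreeIcc σ R 1 1 := by
  rw [← Polynomial.monomial_zero_left]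
  exact monomial_mem 1 (by simp)

theorem mul_mem {a b a' b' : ℕ} {P Q : Polynomial (MvPolynomial σ R)}
    (hP : P ∈ totalDegreeIcc σ R a b) (hQ : Q ∈ totalDegreeIcc σ R a' b') :
    P * Q ∈ totalDegreeIcc σ R (a + a') (b + b') := by
  classical
  intro k d hd
  rw [Polynomial.coeff_mul] at hd
  obtain ⟨x, hx, hd⟩ := Finset.mem_biUnion.1 (support_sum hd)
  obtain ⟨d₁, hd₁, d₂, hd₂, rfl⟩ := Finset.mem_add.1 (support_mul _ _ hd)
  obtain ⟨h₁, h₁'⟩ := hP x.1 d₁ hd₁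
  obtain ⟨h₂, h₂'⟩ := hQ x.2 d₂ hd₂
  rw [← Finset.HasAntidiagonal.mem_antidiagonal.1 hx, map_add]
  constructor <;> omega

theorem prod_mem {ι : Type*} {s : Finset ι} {a b : ι → ℕ}
    {P : ι → Polynomial (MvPolynomial σ R)} (hP : ∀ i ∈ s, P i ∈ totalDegreeIcc σ R (a i) (b i)) :
    ∏ i ∈ s, P i ∈ totalDegreeIcc σ R (∑ i ∈ s, a i) (∑ i ∈ s, b i) := by
  classical
  induction s using Finset.induction with
  | empty => simpa using one_mem
  | insert i s hi ih =>
    simp only [Finset.prod_insert hi, Finset.sum_insert hi]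
    exact mul_mem (hP i (Finset.mem_insert_self i s))
      (ih fun t ht => hP t (Finset.mem_insert_of_mem ht))

theorem pow_mem {a b : ℕ} {P : Polynomial (MvPolynomial σ R)} (hP : P ∈ totalDegreeIcc σ R a b)
    (n : ℕ) : P ^ n ∈ totalDegreeIcc σ R (n * a) (n * b) := by
  simpa using prod_mem (s := Finset.range n) fun _ _ => hP

theorem X_mul_X_sub_one_mul_prod_X_sub_C_mem {R : Type*} [CommRing R] (s : Finset σ) :
    Polynomial.X * (Polynomial.X - 1) * ∏ t ∈ s, (Polynomial.X - Polynomial.C (X t)) ∈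
      totalDegreeIcc σ R (s.card + 1) (s.card + 1 + 1) := by
  have hX_sub_one : (Polynomial.X - 1 : Polynomial (MvPolynomial σ R)) ∈ totalDegreeIcc σ R 0 1 :=
    sub_mem (mono (Nat.zero_le 1) le_rfl X_mem) (mono le_rfl (Nat.zero_le 1) one_mem)
  have hprod := prod_mem (s := s) fun t _ => sub_mem X_mem (C_X_mem (R := R) t)
  simp only [Finset.sum_const, smul_eq_mul, mul_one] at hprod
  convert mul_mem (mul_mem X_mem hX_sub_one) hprod using 2 <;> omega

theorem degree_add_le {a b k k' : ℕ} {P : Polynomial (MvPolynomial σ R)} {d d' : σ →₀ ℕ}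
    (hP : P ∈ totalDegreeIcc σ R a b) (hd : d ∈ (P.coeff k).support)
    (hd' : d' ∈ (P.coeff k').support) : d.degree + k + a ≤ d'.degree + k' + b := by
  have := (hP k d hd).2
  have := (hP k' d' hd').1
  omega

end totalDegreeIcc

open Function in
theorem MvPolynomial.linearIndependent_of_pairwise_disjoint_support {ι σ R : Type*} [CommRing R]
    [NoZeroDivisors R] {v : ι → MvPolynomial σ R} (hv : ∀ i, v i ≠ 0)
    (hdisj : Pairwise (Disjoint on fun i => (v i).support)) : LinearIndependent R v := by
  rw [linearIndependent_iff']
  intro s f hsum i hi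
  obtain ⟨d, hd⟩ := support_nonempty.2 (hv i)
  have hcoeff := congrArg (coeff d) hsum
  rw [coeff_sum, Finset.sum_eq_single i, coeff_smul, smul_eq_mul, coeff_zero] at hcoeff
  · exact (mul_eq_zero.1 hcoeff).resolve_right (mem_support_iff.1 hd)
  · intro i' _ hi'
    rw [coeff_smul, notMem_support_iff.1 (Finset.disjoint_right.1 (hdisj hi') hd), smul_zero]
  · exact fun h => absurd hi h

theorem cartier_manin_entries_degree_gap_general (p : ℕ) (hp : p.Prime) (hodd : Odd p)
    (g : ℕ)
    (c : ℕ → MvPolynomial (Fin (2 * g - 1)) (ZMod p))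
    (hc : ∀ k : ℕ, c k = Polynomial.coeff
      ((Polynomial.X * (Polynomial.X - 1)
          * ∏ t : Fin (2 * g - 1), (Polynomial.X - Polynomial.C (MvPolynomial.X t))
        : Polynomial (MvPolynomial (Fin (2 * g - 1)) (ZMod p))) ^ ((p - 1) / 2)) k)
    (j : ℕ) :
    (∀ i : ℕ, 1 ≤ i → i ≤ g - 1 →
      ∀ d ∈ (c ((i + 1) * p - j)).support, ∀ d' ∈ (c (i * p - j)).support,
        (d.sum fun _ e => e) + (p + 1) / 2 ≤ (d'.sum fun _ e => e))
    ∧ ((∀ i : ℕ, 1 ≤ i → i ≤ g → c (i * p - j) ≠ 0) →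
        LinearIndependent (ZMod p) (fun i : Fin g => c ((i.val + 1) * p - j))) := by
  obtain ⟨n, rfl⟩ := hodd
  have hn : n ≠ 0 := by rintro rfl; exact Nat.not_prime_one hp
  rw [show (2 * n + 1 + 1) / 2 = n + 1 by omega]
  rw [show (2 * n + 1 - 1) / 2 = n by omega] at hc
  -- `i * p - j` truncates to `0` when `i * p ≤ j`; the factor `X` kills that coefficient.
  have hc0 : c 0 = 0 := by simp [hc, Polynomial.coeff_zero_eq_eval_zero, hn]
  have hpos {k : ℕ} {d} (hd : d ∈ (c k).support) : 0 < k := by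
    rw [Nat.pos_iff_ne_zero]; rintro rfl; simp [hc0] at hd
  have hwidth {k k' : ℕ} {d d'} (hd : d ∈ (c k).support) (hd' : d' ∈ (c k').support) :
      d.degree + k ≤ d'.degree + k' + n := by
    rw [hc] at hd hd'
    have := totalDegreeIcc.degree_add_le
      (totalDegreeIcc.pow_mem (totalDegreeIcc.X_mul_X_sub_one_mul_prod_X_sub_C_mem _) n) hd hd'
    simp only [mul_add, mul_one] at this
    omega
  refine ⟨fun i _ _ d hd d' hd' => ?_, fun hnz => ?_⟩
  · have hgap := hwidth hd hd'
    have hk := hpos hd'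
    have hshift : (i + 1) * (2 * n + 1) = i * (2 * n + 1) + (2 * n + 1) := by ring
    change d.degree + _ ≤ d'.degree
    omega
  · have := Fact.mk hp
    refine linearIndependent_of_pairwise_disjoint_support (fun i => hnz _ le_add_self i.isLt) ?_
    rw [pairwise_disjoint_on]
    intro i i' hii'
    refine Finset.disjoint_left.2 fun d hd hd' => ?_
    have hgap := hwidth hd' hd
    have hk := hpos hd
    have hle : (i + 1 + 1) * (2 * n + 1) ≤ (i' + 1) * (2 * n + 1) :=
      Nat.mul_le_mul_right _ (by omega)
    have hshift : (i + 1 + 1) * (2 * n + 1) = (i + 1) * (2 * n + 1) + (2 * n + 1) := by ring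
    omega

/-- For fixed `j`, the total degrees of the monomials of `c_{(i+1)p−j}` are smaller
than those of `c_{ip−j}` by at least the gap `(p+1)/2`; in particular, if
`c_{p−j}, …, c_{gp−j}` are all nonzero then they are linearly independent over `𝔽_p`. -/
theorem cartier_manin_entries_degree_gap (p : ℕ) (hp : p.Prime) (hodd : Odd p)
    (g : ℕ) (hg1 : 1 ≤ g)
    (c : ℕ → MvPolynomial (Fin (2 * g - 1)) (ZMod p))
    (hc : ∀ k : ℕ, c k = Polynomial.coeff
      ((Polynomial.X * (Polynomial.X - 1)
          * ∏ t : Fin (2 * g - 1), (Polynomial.X - Polynomial.C (MvPolynomial.X t))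
        : Polynomial (MvPolynomial (Fin (2 * g - 1)) (ZMod p))) ^ ((p - 1) / 2)) k)
    (j : ℕ) (hj1 : 1 ≤ j) (hjg : j ≤ g) :
    (∀ i : ℕ, 1 ≤ i → i ≤ g - 1 →
      ∀ d ∈ (c ((i + 1) * p - j)).support, ∀ d' ∈ (c (i * p - j)).support,
        (d.sum fun _ e => e) + (p + 1) / 2 ≤ (d'.sum fun _ e => e))
    ∧ ((∀ i : ℕ, 1 ≤ i → i ≤ g → c (i * p - j) ≠ 0) →
        LinearIndependent (ZMod p) (fun i : Fin g => c ((i.val + 1) * p - j))) :=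
  cartier_manin_entries_degree_gap_general p hp hodd g c hc j
end
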